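/- Let n ≥ 2 and let f : ℝ≥0 → ℝ ∪ {−∞} be a strictly increasing function that is continuous on ℝ>0. Then the following are equivalent: (a) for every positive-admitting two-value instance with n agents, every allocation chosen by the additive welfarist rule with f is EF1; (b) there exist constants α ∈ ℝ>0 and β ∈ ℝ such that f(x) = α·log x + β for all x ∈ ℝ≥0 (with f(0) = −∞). -/

import Mathlib

/-!
If `f = α log + β`, a maximiser of Nash welfare is EF1: were agent `i` to envy `j` even after
the removal of any good, moving to `i` the good `g ∈ A j` minimising `u j g / u i g` would raise
the product `u i (A i) * u j (A j)`.

Conversely, with `n (k + 1)` goods valued `a` by agent `i` and `b ≠ a` by everybody else, EF1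
forces all bundles to have size `k + 1`, while moving one good from `j` to `i` breaks EF1; so that
allocation has strictly smaller welfare, i.e. `Δ_{k+1}(a) < Δ_k(b)` for the real-valued `F = f`
on `(0, ∞)`. Refining the increments `t` times and letting `t → ∞` makes every `Δ_k` constant,
whence `F (N x) = F N + F x - F 1`, then `F (r x) = F r + F x - F 1` for rational and, by
continuity, for all real `r > 0`. The continuous solutions of this Cauchy equation are
`α log + β`, with `α > 0` by monotonicity, and `f 0 < α log x + β` for all `x > 0` forces
`f 0 = ⊥`.
-/

open scoped BigOperators

noncomputable section

namespace FairDiv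

/-- The bundle of goods received by agent `i` under the assignment `A` of goods to agents. -/
def bundle {n m : ℕ} (A : Fin m → Fin n) (i : Fin n) : Finset (Fin m) :=
  Finset.univ.filter fun g => A g = i

/-- Additive utility of agent `i` for a set `S` of goods. -/
def util {n m : ℕ} (u : Fin n → Fin m → ℝ) (i : Fin n) (S : Finset (Fin m)) : ℝ :=
  ∑ g ∈ S, u i g

/-- Envy-freeness up to one good. -/
def EF1 {n m : ℕ} (u : Fin n → Fin m → ℝ) (A : Fin m → Fin n) : Prop :=
  ∀ i j : Fin n, bundle A j ≠ ∅ →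
    ∃ g ∈ bundle A j, util u i ((bundle A j).erase g) ≤ util u i (bundle A i)

/-- Welfare of an allocation under the additive welfarist rule with function `f`. -/
def welfare {n m : ℕ} (f : ℝ → EReal) (u : Fin n → Fin m → ℝ) (A : Fin m → Fin n) : EReal :=
  ∑ i : Fin n, f (util u i (bundle A i))

/-- An allocation is chosen by the additive welfarist rule with `f` if it maximizes welfare. -/
def Chosen {n m : ℕ} (f : ℝ → EReal) (u : Fin n → Fin m → ℝ) (A : Fin m → Fin n) : Prop :=
  ∀ B : Fin m → Fin n, welfare f u B ≤ welfare f u A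

/-- An instance is positive-admitting if some allocation gives everyone positive utility. -/
def PositiveAdmitting {n m : ℕ} (u : Fin n → Fin m → ℝ) : Prop :=
  ∃ B : Fin m → Fin n, ∀ i : Fin n, 0 < util u i (bundle B i)

def IdenticalGood {n m : ℕ} (u : Fin n → Fin m → ℝ) : Prop :=
  ∀ i : Fin n, ∃ a : ℝ, 0 < a ∧ ∀ g : Fin m, u i g = a

def TwoValue {n m : ℕ} (u : Fin n → Fin m → ℝ) : Prop :=
  ∃ a₁ a₂ : ℝ, a₁ ≠ a₂ ∧ 0 ≤ a₁ ∧ 0 ≤ a₂ ∧ ∀ i g, u i g = a₁ ∨ u i g = a₂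

def Normalized {n m : ℕ} (u : Fin n → Fin m → ℝ) : Prop :=
  ∀ i j : Fin n, util u i Finset.univ = util u j Finset.univ

def IntegerValued {n m : ℕ} (u : Fin n → Fin m → ℝ) : Prop :=
  ∀ i g, ∃ z : ℕ, u i g = (z : ℝ)

def Binary {n m : ℕ} (u : Fin n → Fin m → ℝ) : Prop :=
  ∀ i g, u i g = 0 ∨ u i g = 1

/-- `Δ_{f,k}(x) = f((k+1)x) − f(kx)`, valued in `EReal` (it is `+∞` iff `f(kx) = −∞`). -/
def Delta (f : ℝ → EReal) (k : ℕ) (x : ℝ) : EReal :=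
  f (((k : ℝ) + 1) * x) - f ((k : ℝ) * x)

/-- Condition 1: `Δ_{f,k}(b) > Δ_{f,k+1}(a)` for all `k ∈ ℤ≥0` and `a, b ∈ ℝ>0`. -/
def Cond1 (f : ℝ → EReal) : Prop :=
  ∀ k : ℕ, ∀ a b : ℝ, 0 < a → 0 < b → Delta f (k + 1) a < Delta f k b

/-- Condition 1a: `Δ_{f,k}` is constant on `ℝ>0` for every `k ∈ ℤ>0`. -/
def Cond1a (f : ℝ → EReal) : Prop :=
  ∀ k : ℕ, 0 < k → ∀ x y : ℝ, 0 < x → 0 < y → Delta f k x = Delta f k y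

/-- Condition 2. -/
def Cond2 (f : ℝ → EReal) : Prop :=
  ∀ a b c d : ℝ, 0 ≤ a → 0 ≤ b → 0 ≤ c → 0 ≤ d →
    min a b ≤ min c d → a * b < c * d → f a + f b < f c + f d

/-- Condition 3: `Δ_{f,k}(b) > Δ_{f,k+1}(a)` for all `k ∈ ℤ≥0` and `a, b ∈ ℤ>0`. -/
def Cond3 (f : ℝ → EReal) : Prop :=
  ∀ k : ℕ, ∀ a b : ℕ, 0 < a → 0 < b → Delta f (k + 1) (a : ℝ) < Delta f k (b : ℝ)

/-- Condition 3a. -/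
def Cond3a (f : ℝ → EReal) : Prop :=
  ∀ k l : ℕ, l < k → ∀ a b : ℕ, 0 < a → 0 < b → Delta f k (a : ℝ) < Delta f l (b : ℝ)

/-- Condition 3b: `Δ_{f,k}(1) > Δ_{f,k+1}(a) > Δ_{f,k+2}(1)` for `k ∈ ℤ≥0`, `a ∈ ℤ>0`. -/
def Cond3b (f : ℝ → EReal) : Prop :=
  ∀ k : ℕ, ∀ a : ℕ, 0 < a →
    Delta f (k + 1) (a : ℝ) < Delta f k 1 ∧ Delta f (k + 2) 1 < Delta f (k + 1) (a : ℝ)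

/-- Condition 4: `Δ_{f,k}(1) > Δ_{f,k+1}(1)` for all `k ∈ ℤ≥0`. -/
def Cond4 (f : ℝ → EReal) : Prop :=
  ∀ k : ℕ, Delta f (k + 1) 1 < Delta f k 1

/-- Condition 5. -/
def Cond5 (f : ℝ → EReal) : Prop :=
  ∀ a b k l r : ℕ, 0 < a → 0 < b → b ≤ a → l * b + r * a < (k + 1) * b →
    Delta f (k + 1) (a : ℝ) <
        f (((l : ℝ) + 1) * (b : ℝ) + (r : ℝ) * (a : ℝ)) - f ((l : ℝ) * (b : ℝ) + (r : ℝ) * (a : ℝ))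
      ∧ Delta f (k + 2) 1 < Delta f (k + 1) (a : ℝ)

/-- Condition 6a: `f((k+1)b−1) − f(kb−1) > Δ_{f,k}(a)` for all `k, a, b ∈ ℤ>0`. -/
def Cond6a (f : ℝ → EReal) : Prop :=
  ∀ k a b : ℕ, 0 < k → 0 < a → 0 < b →
    Delta f k (a : ℝ) < f (((k : ℝ) + 1) * (b : ℝ) - 1) - f ((k : ℝ) * (b : ℝ) - 1)

/-- Condition 6b: `f(y+b) − f(y) > f(x+a) − f(x)` whenever `x/a ≥ (y+1)/b`. -/
def Cond6b (f : ℝ → EReal) : Prop :=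
  ∀ a b : ℕ, ∀ x y : ℕ, 0 < a → 0 < b → ((y : ℝ) + 1) / (b : ℝ) ≤ (x : ℝ) / (a : ℝ) →
    f ((x : ℝ) + (a : ℝ)) - f (x : ℝ) < f ((y : ℝ) + (b : ℝ)) - f (y : ℝ)

/-- Modified logarithmic function `λ_c(x) = log (x + c)`, with `log 0 = −∞`. -/
def lam (c : ℝ) (x : ℝ) : EReal :=
  if x + c = 0 then ⊥ else ((Real.log (x + c) : ℝ) : EReal)

/-- The `p`-mean function `φ_p`, with `φ_p(0) = −∞` for `p ≤ 0`. -/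
def phi (p : ℝ) (x : ℝ) : EReal :=
  if 0 < p then ((x ^ p : ℝ) : EReal)
  else if x = 0 then ⊥
  else if p = 0 then ((Real.log x : ℝ) : EReal)
  else ((-(x ^ p) : ℝ) : EReal)

/-- Modified harmonic number `h_c` on nonnegative integers. -/
def hmod (c : ℝ) (x : ℕ) : EReal :=
  if c = -1 then
    (if x = 0 then (⊥ : EReal)
     else (((∑ t ∈ Finset.range (x - 1), (1 : ℝ) / ((t : ℝ) + 1)) : ℝ) : EReal))
  else (((∑ t ∈ Finset.range x, (1 : ℝ) / ((t : ℝ) + 1 + c)) : ℝ) : EReal)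

/-- Condition 3b for a function defined on nonnegative integers. -/
def Cond3bNat (f : ℕ → EReal) : Prop :=
  ∀ k : ℕ, ∀ a : ℕ, 0 < a →
    f ((k + 2) * a) - f ((k + 1) * a) < f (k + 1) - f k
    ∧ f (k + 3) - f (k + 2) < f ((k + 2) * a) - f ((k + 1) * a)

open Finset Function Filter Topology

lemma coe_finset_sum {ι : Type*} (s : Finset ι) (g : ι → ℝ) :
    ((∑ i ∈ s, g i : ℝ) : EReal) = ∑ i ∈ s, (g i : EReal) :=
  map_sum (⟨⟨Real.toEReal, EReal.coe_zero⟩, EReal.coe_add⟩ : ℝ →+ EReal) g s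

lemma eq_of_forall_le_succ_of_sum_eq {ι : Type*} [Fintype ι] {c : ι → ℕ} {s : ℕ}
    (hc : ∀ i j, c j ≤ c i + 1) (hsum : ∑ i, c i = Fintype.card ι * s) (i : ι) : c i = s := by
  rcases lt_trichotomy (c i) s with hlt | heq | hgt
  · have : ∑ j, c j < ∑ _j : ι, s :=
      sum_lt_sum (fun j _ => (hc i j).trans hlt) ⟨i, mem_univ i, hlt⟩
    simp [hsum] at this
  · exact heq
  · have : ∑ _j : ι, s < ∑ j, c j :=
      sum_lt_sum (fun j _ => by have := hc j i; omega) ⟨i, mem_univ i, hgt⟩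
    simp [hsum] at this

lemma exists_mem_mul_sum_le {α : Type*} {S : Finset α} {v w : α → ℝ}
    (hv : ∀ g ∈ S, 0 ≤ v g) (hw : ∀ g ∈ S, 0 ≤ w g) (hS : ∃ g ∈ S, 0 < v g) :
    ∃ g ∈ S, 0 < v g ∧ w g * ∑ g' ∈ S, v g' ≤ v g * ∑ g' ∈ S, w g' := by
  obtain ⟨g, hgT, hmin⟩ := exists_min_image (S.filter (0 < v ·)) (fun g => w g / v g)
    (by simpa [Finset.Nonempty] using hS)
  rw [mem_filter] at hgT
  refine ⟨g, hgT.1, hgT.2, ?_⟩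
  rw [mul_sum, mul_sum]
  refine sum_le_sum fun g' hg' => ?_
  rcases (hv g' hg').eq_or_lt with h0 | hpos
  · rw [← h0, mul_zero]
    exact mul_nonneg hgT.2.le (hw g' hg')
  · have := hmin g' (mem_filter.2 ⟨hg', hpos⟩)
    rw [div_le_div_iff₀ hgT.2 hpos] at this
    linarith

lemma mul_lt_add_mul_sub {x y z p q : ℝ} (hy : 0 < y) (hp : 0 < p) (hq : 0 ≤ q)
    (hz : x + p < z) (hqz : q * z ≤ p * y) : x * y < (x + p) * (y - q) := by
  rcases hq.eq_or_lt with rfl | hq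
  · nlinarith
  · nlinarith [mul_lt_mul_of_pos_left hz hq]

section LogCharacterization

/-- Condition 1 of the paper for a real-valued `F`, restricted to `k ≥ 1` and distinct
`a, b > 0`: `Δ_{F,k+1}(a) < Δ_{F,k}(b)`. -/
def DeltaSuccLt (F : ℝ → ℝ) : Prop :=
  ∀ k : ℕ, 1 ≤ k → ∀ a b : ℝ, 0 < a → 0 < b → a ≠ b →
    F ((k + 2) * a) - F ((k + 1) * a) < F ((k + 1) * b) - F (k * b)

variable {F : ℝ → ℝ}

lemma sub_le_sub_of_forall_step_le (K : ℕ) {a b : ℝ}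
    (hstep : ∀ j : ℕ, K ≤ j →
      F ((j + 2) * a) - F ((j + 1) * a) ≤ F ((j + 1) * b) - F (j * b)) (t : ℕ) :
    F ((K + t + 1) * a) - F ((K + 1) * a) ≤ F ((K + t) * b) - F (K * b) := by
  induction t with
  | zero => simp
  | succ t ih =>
    have h := hstep (K + t) (by omega)
    push_cast at h ⊢
    rw [show (K + (t + 1) : ℝ) = K + t + 1 by ring, show (K + t + 1 + 1 : ℝ) = K + t + 2 by ring]
    linarith

lemma DeltaSuccLt.delta_le (hF : DeltaSuccLt F) (hcont : ContinuousOn F (Set.Ioi 0))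
    {k : ℕ} (hk : 1 ≤ k) {x y : ℝ} (hx : 0 < x) (hy : 0 < y) :
    F ((k + 1) * y) - F (k * y) ≤ F ((k + 1) * x) - F (k * x) := by
  rcases eq_or_ne y x with rfl | hxy
  · exact le_rfl
  -- Refine both increments into `t` steps of sizes `y / t` and `x / t`, then let `t → ∞`.
  have happrox : ∀ t : ℕ, 1 ≤ t →
      F ((k + 1) * y + y / t) - F (k * y + y / t) ≤ F ((k + 1) * x) - F (k * x) := by
    intro t ht
    have ht' : (0 : ℝ) < t := by exact_mod_cast ht
    have h := sub_le_sub_of_forall_step_le (F := F) (k * t) (a := y / t) (b := x / t)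
      (fun j hj => (hF j ((Nat.one_le_iff_ne_zero.2 (by positivity)).trans hj) _ _
        (by positivity) (by positivity) (by rwa [Ne, div_left_inj' ht'.ne'])).le) t
    convert h using 3 <;> push_cast <;> field_simp
  have hlim : Tendsto (fun t : ℕ => F ((k + 1) * y + y / t) - F (k * y + y / t)) atTop
      (𝓝 (F ((k + 1) * y) - F (k * y))) := by
    have hk' : (0 : ℝ) < k := by exact_mod_cast hk
    have hshift : ∀ c : ℝ, Tendsto (fun t : ℕ => c + y / t) atTop (𝓝 c) := fun c => by
      simpa using tendsto_const_nhds.add (tendsto_const_div_atTop_nhds_zero_nat y)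
    exact ((hcont.continuousAt (Ioi_mem_nhds (by positivity))).tendsto.comp (hshift _)).sub
      ((hcont.continuousAt (Ioi_mem_nhds (by positivity))).tendsto.comp (hshift _))
  exact le_of_tendsto hlim (eventually_atTop.2 ⟨1, happrox⟩)

lemma DeltaSuccLt.delta_eq (hF : DeltaSuccLt F) (hcont : ContinuousOn F (Set.Ioi 0))
    {k : ℕ} (hk : 1 ≤ k) {x y : ℝ} (hx : 0 < x) (hy : 0 < y) :
    F ((k + 1) * x) - F (k * x) = F ((k + 1) * y) - F (k * y) :=
  le_antisymm (hF.delta_le hcont hk hy hx) (hF.delta_le hcont hk hx hy)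

lemma DeltaSuccLt.map_natCast_mul (hF : DeltaSuccLt F) (hcont : ContinuousOn F (Set.Ioi 0))
    {N : ℕ} (hN : 1 ≤ N) {x : ℝ} (hx : 0 < x) : F (N * x) = F N + F x - F 1 := by
  induction N, hN using Nat.le_induction with
  | base => simp
  | succ N hN ih =>
    have := hF.delta_eq hcont hN hx one_pos
    rw [mul_one, mul_one] at this
    push_cast
    linarith

lemma DeltaSuccLt.map_ratCast_mul (hF : DeltaSuccLt F) (hcont : ContinuousOn F (Set.Ioi 0))
    {r : ℚ} (hr : 0 < r) {y : ℝ} (hy : 0 < y) : F (r * y) = F r + F y - F 1 := by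
  set p := r.num.toNat
  set q := r.den
  have hp : 1 ≤ p := by have := Rat.num_pos.2 hr; omega
  have hq' : (0 : ℝ) < q := by exact_mod_cast r.den_pos
  have hr' : (r : ℝ) = p / q := by
    rw [Rat.cast_def, ← Int.toNat_of_nonneg (Rat.num_nonneg.2 hr.le)]
    rfl
  have h1 := hF.map_natCast_mul hcont hp (div_pos hy hq')
  have h2 := hF.map_natCast_mul hcont r.den_pos (div_pos hy hq')
  have h3 := hF.map_natCast_mul hcont hp (div_pos one_pos hq')
  have h4 := hF.map_natCast_mul hcont r.den_pos (div_pos one_pos hq')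
  rw [mul_div_cancel₀ _ hq'.ne'] at h2 h4
  rw [hr', div_mul_eq_mul_div, mul_div_assoc]
  rw [mul_one_div] at h3
  linarith

lemma DeltaSuccLt.map_mul (hF : DeltaSuccLt F) (hcont : ContinuousOn F (Set.Ioi 0))
    {x y : ℝ} (hx : 0 < x) (hy : 0 < y) : F (x * y) = F x + F y - F 1 := by
  have heq : Set.EqOn (fun r => F (r * y)) (fun r => F r + F y - F 1) (Set.Ioi 0) := by
    refine Set.EqOn.of_subset_closure (s := Set.Ioi 0 ∩ Set.range ((↑) : ℚ → ℝ)) ?_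
      (hcont.comp (continuousOn_id.mul continuousOn_const) fun r (hr : 0 < r) => mul_pos hr hy)
      ((hcont.add continuousOn_const).sub continuousOn_const) Set.inter_subset_left
      (Rat.denseRange_cast.open_subset_closure_inter isOpen_Ioi)
    rintro _ ⟨hr, r, rfl⟩
    exact hF.map_ratCast_mul hcont (by exact_mod_cast Set.mem_Ioi.1 hr) hy
  exact heq hx

lemma eq_mul_log_of_map_mul {H : ℝ → ℝ} (hcont : ContinuousOn H (Set.Ioi 0))
    (hmul : ∀ x y, 0 < x → 0 < y → H (x * y) = H x + H y) {x : ℝ} (hx : 0 < x) :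
    H x = H (Real.exp 1) * Real.log x := by
  let G : ℝ →+ ℝ := AddMonoidHom.mk' (fun t => H (Real.exp t)) fun s t => by
    simp only [Real.exp_add, hmul _ _ (Real.exp_pos s) (Real.exp_pos t)]
  have hG : Continuous G := hcont.comp_continuous Real.continuous_exp Real.exp_pos
  have := map_real_smul G hG (Real.log x) 1
  simp only [smul_eq_mul, mul_one, G, AddMonoidHom.mk'_apply, Real.exp_log hx] at this
  rw [this, mul_comm]

theorem DeltaSuccLt.exists_log (hF : DeltaSuccLt F) (hmono : StrictMonoOn F (Set.Ioi 0))
    (hcont : ContinuousOn F (Set.Ioi 0)) :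
    ∃ α β : ℝ, 0 < α ∧ ∀ x, 0 < x → F x = α * Real.log x + β := by
  refine ⟨F (Real.exp 1) - F 1, F 1, sub_pos.2 (hmono (Set.mem_Ioi.2 one_pos) (Real.exp_pos 1)
    (Real.one_lt_exp_iff.2 one_pos)), fun x hx => ?_⟩
  have := eq_mul_log_of_map_mul (H := fun x => F x - F 1) (hcont.sub continuousOn_const)
    (fun x y hx hy => by rw [hF.map_mul hcont hx hy]; ring) hx
  linarith

end LogCharacterization

section Allocation

variable {n m : ℕ}

lemma mem_bundle {A : Fin m → Fin n} {i : Fin n} {g : Fin m} : g ∈ bundle A i ↔ A g = i := by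
  simp [bundle]

lemma notMem_bundle_of_mem {A : Fin m → Fin n} {g : Fin m} {j l : Fin n}
    (hg : g ∈ bundle A j) (hl : l ≠ j) : g ∉ bundle A l :=
  fun h => hl ((mem_bundle.1 h).symm.trans (mem_bundle.1 hg))

lemma sum_card_bundle (A : Fin m → Fin n) : ∑ i, #(bundle A i) = m := by
  simpa [bundle] using
    (card_eq_sum_card_fiberwise (s := univ) (t := univ) fun g _ => mem_univ (A g)).symm

lemma util_eq_card_mul {u : Fin n → Fin m → ℝ} {i : Fin n} {c : ℝ} (h : ∀ g, u i g = c)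
    (S : Finset (Fin m)) : util u i S = #S * c := by
  simp [util, h]

lemma util_erase (u : Fin n → Fin m → ℝ) (i : Fin n) {S : Finset (Fin m)} {g : Fin m}
    (hg : g ∈ S) : util u i (S.erase g) = util u i S - u i g :=
  sum_erase_eq_sub hg

lemma bundle_update_self (A : Fin m → Fin n) (g : Fin m) (i : Fin n) :
    bundle (update A g i) i = insert g (bundle A i) := by
  ext g'
  by_cases hg : g' = g <;> simp [bundle, update, hg]

lemma bundle_update_of_ne (A : Fin m → Fin n) (g : Fin m) {i l : Fin n} (hl : l ≠ i) :
    bundle (update A g i) l = (bundle A l).erase g := by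
  ext g'
  by_cases hg : g' = g <;> simp [bundle, update, hg, hl.symm]

lemma bundle_update_of_notMem {A : Fin m → Fin n} {g : Fin m} {i l : Fin n} (hl : l ≠ i)
    (hg : g ∉ bundle A l) : bundle (update A g i) l = bundle A l := by
  rw [bundle_update_of_ne A g hl, erase_eq_of_notMem hg]

lemma util_update_self (u : Fin n → Fin m → ℝ) {A : Fin m → Fin n} {g : Fin m} {i : Fin n}
    (hg : g ∉ bundle A i) (l : Fin n) :
    util u l (bundle (update A g i) i) = util u l (bundle A i) + u l g := by
  rw [bundle_update_self, util, sum_insert hg, add_comm, util]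

lemma util_update_of_mem (u : Fin n → Fin m → ℝ) {A : Fin m → Fin n} {g : Fin m} {i j : Fin n}
    (hg : g ∈ bundle A j) (hij : i ≠ j) (l : Fin n) :
    util u l (bundle (update A g i) j) = util u l (bundle A j) - u l g := by
  rw [bundle_update_of_ne A g hij.symm, util_erase u l hg]

lemma util_update_pos {u : Fin n → Fin m → ℝ} (hu : ∀ i g, 0 ≤ u i g) {A : Fin m → Fin n}
    {g : Fin m} {i j : Fin n} (hA : ∀ l, 0 < util u l (bundle A l)) (hg : g ∈ bundle A j)
    (hij : i ≠ j) (hj : u j g < util u j (bundle A j)) (l : Fin n) :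
    0 < util u l (bundle (update A g i) l) := by
  rcases eq_or_ne l i with rfl | hli
  · rw [util_update_self u (notMem_bundle_of_mem hg hij)]
    linarith [hA l, hu l g]
  rcases eq_or_ne l j with rfl | hlj
  · rw [util_update_of_mem u hg hij]
    linarith
  · rw [bundle_update_of_notMem hli (notMem_bundle_of_mem hg hlj)]
    exact hA l

lemma sum_util_update_sub_sum (F : ℝ → ℝ) (u : Fin n → Fin m → ℝ) {A : Fin m → Fin n}
    {g : Fin m} {i j : Fin n} (hg : g ∈ bundle A j) (hij : i ≠ j) :
    ∑ l, F (util u l (bundle (update A g i) l)) - ∑ l, F (util u l (bundle A l)) =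
      (F (util u i (bundle A i) + u i g) - F (util u i (bundle A i))) +
        (F (util u j (bundle A j) - u j g) - F (util u j (bundle A j))) := by
  rw [← sum_sub_distrib, Fintype.sum_eq_add i j hij]
  · rw [util_update_self u (notMem_bundle_of_mem hg hij), util_update_of_mem u hg hij]
  · rintro l ⟨hli, hlj⟩
    rw [bundle_update_of_notMem hli (notMem_bundle_of_mem hg hlj), sub_self]

lemma welfare_eq_coe_sum {f : ℝ → EReal} {F : ℝ → ℝ} (hF : ∀ x, 0 < x → f x = F x)
    {u : Fin n → Fin m → ℝ} {A : Fin m → Fin n} (hA : ∀ i, 0 < util u i (bundle A i)) :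
    welfare f u A = ((∑ i, F (util u i (bundle A i)) : ℝ) : EReal) := by
  rw [coe_finset_sum]
  exact sum_congr rfl fun i _ => hF _ (hA i)

lemma exists_chosen [Nonempty (Fin n)] (f : ℝ → EReal) (u : Fin n → Fin m → ℝ) :
    ∃ A, Chosen f u A :=
  Finite.exists_max (welfare f u)

lemma Chosen.util_pos {f : ℝ → EReal} {F : ℝ → ℝ} {u : Fin n → Fin m → ℝ} {A : Fin m → Fin n}
    (hA : Chosen f u A) (hf0 : f 0 = ⊥) (hF : ∀ x, 0 < x → f x = F x) (hu : ∀ i g, 0 ≤ u i g)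
    (hpa : PositiveAdmitting u) (i : Fin n) : 0 < util u i (bundle A i) := by
  obtain ⟨B, hB⟩ := hpa
  refine (sum_nonneg fun g _ => hu i g).lt_of_ne fun h => ?_
  have hAbot : welfare f u A = ⊥ := by
    rw [welfare, ← add_sum_erase _ _ (mem_univ i), util, ← h, hf0, EReal.bot_add]
  have := hA B
  rw [hAbot, le_bot_iff, welfare_eq_coe_sum hF hB] at this
  exact EReal.coe_ne_bot _ this

lemma positiveAdmitting_of_pos {u : Fin n → Fin m → ℝ} (hn : 0 < n) (hnm : n ≤ m)
    (hu : ∀ i g, 0 < u i g) : PositiveAdmitting u := by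
  refine ⟨fun g => ⟨g % n, Nat.mod_lt _ hn⟩, fun i =>
    sum_pos (fun g _ => hu i g) ⟨⟨i, i.2.trans_le hnm⟩, ?_⟩⟩
  simp [bundle, Fin.ext_iff, Nat.mod_eq_of_lt i.2]

lemma IdenticalGood.card_bundle_le_succ {u : Fin n → Fin m → ℝ} (hu : IdenticalGood u)
    {A : Fin m → Fin n} (hA : EF1 u A) (i j : Fin n) : #(bundle A j) ≤ #(bundle A i) + 1 := by
  rcases (bundle A j).eq_empty_or_nonempty with h | h
  · simp [h]
  obtain ⟨g, hg, hle⟩ := hA i j h.ne_empty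
  obtain ⟨c, hc, hcu⟩ := hu i
  rw [util_eq_card_mul hcu, util_eq_card_mul hcu, card_erase_of_mem hg,
    mul_le_mul_iff_left₀ hc] at hle
  have : #(bundle A j) - 1 ≤ #(bundle A i) := by exact_mod_cast hle
  omega

lemma IdenticalGood.card_bundle_eq {u : Fin n → Fin m → ℝ} (hu : IdenticalGood u)
    {A : Fin m → Fin n} (hA : EF1 u A) {s : ℕ} (hm : m = n * s) (i : Fin n) :
    #(bundle A i) = s :=
  eq_of_forall_le_succ_of_sum_eq (hu.card_bundle_le_succ hA)
    (by rw [sum_card_bundle, Fintype.card_fin, hm]) i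

end Allocation

section Welfarist

variable {n m : ℕ}

theorem Chosen.EF1_of_log {f : ℝ → EReal} {u : Fin n → Fin m → ℝ} {A : Fin m → Fin n}
    (hA : Chosen f u A) {α β : ℝ} (hα : 0 < α) (hf0 : f 0 = ⊥)
    (hf : ∀ x : ℝ, 0 < x → f x = ((α * Real.log x + β : ℝ) : EReal))
    (hu : ∀ i g, 0 ≤ u i g) (hpa : PositiveAdmitting u) : EF1 u A := by
  have hpos := hA.util_pos hf0 hf hu hpa
  intro i j hj
  by_contra! henvy
  have henvy' : ∀ g ∈ bundle A j, util u i (bundle A i) + u i g < util u i (bundle A j) := by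
    intro g hg
    linarith [util_erase u i hg ▸ henvy g hg]
  obtain ⟨g₀, hg₀⟩ := nonempty_iff_ne_empty.2 hj
  have hij : i ≠ j := by
    rintro rfl
    linarith [henvy' g₀ hg₀, hu i g₀]
  have hz : 0 < util u i (bundle A j) := by linarith [henvy' g₀ hg₀, hpos i, hu i g₀]
  obtain ⟨g, hg, hgi, hratio⟩ := exists_mem_mul_sum_le (fun g _ => hu i g) (fun g _ => hu j g)
    (exists_lt_of_sum_lt (by simpa [util] using hz))
  -- `g` minimises `u j g / u i g` on `A j`, so moving it from `j` to `i` raises the Nash product.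
  have hprod : util u i (bundle A i) * util u j (bundle A j) <
      (util u i (bundle A i) + u i g) * (util u j (bundle A j) - u j g) :=
    mul_lt_add_mul_sub (hpos j) hgi (hu j g) (henvy' g hg) hratio
  have hgj : u j g < util u j (bundle A j) := by
    by_contra! h
    nlinarith [hpos i, hpos j, hu i g]
  have hB := hA (update A g i)
  rw [welfare_eq_coe_sum hf (util_update_pos hu hpos hg hij hgj), welfare_eq_coe_sum hf hpos,
    EReal.coe_le_coe_iff, ← sub_nonpos] at hB
  have hΔ := sum_util_update_sub_sum (fun x => α * Real.log x + β) u hg hij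
  beta_reduce at hΔ
  have hlog := Real.log_lt_log (by nlinarith [hpos i, hpos j]) hprod
  rw [Real.log_mul (hpos i).ne' (hpos j).ne', Real.log_mul (by linarith [hpos i]) (by linarith)]
    at hlog
  linarith [mul_lt_mul_of_pos_left hlog hα]

theorem deltaSuccLt_of_forall_EF1 {f : ℝ → EReal} {F : ℝ → ℝ}
    (hF : ∀ x, 0 < x → f x = F x)
    (hEF1 : ∀ m : ℕ, ∀ u : Fin n → Fin m → ℝ, (∀ i g, 0 ≤ u i g) →
        TwoValue u → PositiveAdmitting u →
        ∀ A : Fin m → Fin n, Chosen f u A → EF1 u A)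
    {i j : Fin n} (hij : i ≠ j) : DeltaSuccLt F := by
  intro k hk a b ha hb hab
  have : Nonempty (Fin n) := ⟨i⟩
  set u : Fin n → Fin (n * (k + 1)) → ℝ := fun l _ => if l = i then a else b with hu
  have hupos : ∀ l g, 0 < u l g := fun l g => by
    simp only [hu]
    split_ifs <;> assumption
  have hui : ∀ g, u i g = a := fun g => if_pos rfl
  have huj : ∀ g, u j g = b := fun g => if_neg hij.symm
  have hident : IdenticalGood u := fun l => ⟨if l = i then a else b, by
    split_ifs <;> assumption, fun _ => rfl⟩
  have hchosen_EF1 : ∀ A, Chosen f u A → EF1 u A :=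
    hEF1 _ u (fun l g => (hupos l g).le)
      ⟨a, b, hab, ha.le, hb.le, fun l g => by simp only [hu]; split_ifs <;> simp⟩
      (positiveAdmitting_of_pos i.pos (Nat.le_mul_of_pos_right n k.succ_pos) hupos)
  obtain ⟨A, hA⟩ := exists_chosen f u
  have hcard := hident.card_bundle_eq (hchosen_EF1 A hA) rfl
  obtain ⟨g, hg⟩ : (bundle A j).Nonempty := card_pos.1 (by rw [hcard]; omega)
  have hApos : ∀ l, 0 < util u l (bundle A l) := fun l => sum_pos (fun g _ => hupos l g)
    (card_pos.1 (by rw [hcard]; omega))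
  have hAi : util u i (bundle A i) = (k + 1) * a := by
    rw [util_eq_card_mul hui, hcard]; push_cast; ring
  have hAj : util u j (bundle A j) = (k + 1) * b := by
    rw [util_eq_card_mul huj, hcard]; push_cast; ring
  -- After moving `g` from `j` to `i`, agent `j` holds two goods fewer than `i`: not EF1.
  have hB : ¬ Chosen f u (update A g i) := by
    intro hB
    have := hident.card_bundle_le_succ (hchosen_EF1 _ hB) j i
    rw [bundle_update_self, card_insert_of_notMem (notMem_bundle_of_mem hg hij),
      bundle_update_of_ne A g hij.symm, card_erase_of_mem hg, hcard, hcard] at this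
    omega
  obtain ⟨C, hC⟩ := not_forall.1 hB
  have hlt := (lt_of_not_ge hC).trans_le (hA C)
  have hgj : u j g < util u j (bundle A j) := by
    rw [hAj, huj g]
    nlinarith [(Nat.one_le_cast (α := ℝ)).2 hk]
  rw [welfare_eq_coe_sum hF (util_update_pos (fun l g => (hupos l g).le) hApos hg hij hgj),
    welfare_eq_coe_sum hF hApos, EReal.coe_lt_coe_iff, ← sub_neg, sum_util_update_sub_sum F u hg hij, hAi, hAj, hui g, huj g,
    show (k + 1) * a + a = (k + 2) * a by ring, show (k + 1) * b - b = k * b by ring] at hlt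
  linarith

end Welfarist

theorem exists_real_of_strictMonoOn {f : ℝ → EReal} (hmono : StrictMonoOn f (Set.Ici 0))
    (hcont : ContinuousOn f (Set.Ioi 0)) :
    ∃ F : ℝ → ℝ, StrictMonoOn F (Set.Ioi 0) ∧ ContinuousOn F (Set.Ioi 0) ∧
      ∀ x, 0 < x → f x = F x := by
  have hbot : ∀ x : ℝ, 0 < x → f x ≠ ⊥ := fun x hx =>
    ne_bot_of_gt (hmono Set.self_mem_Ici hx.le hx)
  have htop : ∀ x : ℝ, 0 < x → f x ≠ ⊤ := fun x hx =>
    ne_top_of_lt (hmono hx.le (Set.mem_Ici.2 (by linarith)) (lt_add_one x))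
  have hF : ∀ x : ℝ, 0 < x → f x = ((f x).toReal : EReal) := fun x hx =>
    (EReal.coe_toReal (htop x hx) (hbot x hx)).symm
  refine ⟨fun x => (f x).toReal, fun x hx y hy hxy => ?_, fun x hx => ?_, hF⟩
  · have := hmono (Set.Ioi_subset_Ici_self hx) (Set.Ioi_subset_Ici_self hy) hxy
    rwa [hF x hx, hF y hy, EReal.coe_lt_coe_iff] at this
  · exact (ContinuousAt.comp (g := EReal.toReal) (EReal.tendsto_toReal (htop x hx) (hbot x hx))
      (hcont.continuousAt (Ioi_mem_nhds hx))).continuousWithinAt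

lemma eq_bot_of_forall_lt_log {e : EReal} {α β : ℝ} (hα : 0 < α)
    (h : ∀ x : ℝ, 0 < x → e < ((α * Real.log x + β : ℝ) : EReal)) : e = ⊥ := by
  by_contra he
  have hlt := h (Real.exp ((e.toReal - β) / α)) (Real.exp_pos _)
  rw [Real.log_exp, mul_div_cancel₀ _ hα.ne', sub_add_cancel,
    EReal.coe_toReal (ne_top_of_lt hlt) he] at hlt
  exact lt_irrefl _ hlt

theorem real_twovalue_general (n : ℕ) (hn : 2 ≤ n) (f : ℝ → EReal)
    (hfmono : StrictMonoOn f (Set.Ici (0 : ℝ)))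
    (hfcont : ContinuousOn f (Set.Ioi (0 : ℝ))) :
    (∀ m : ℕ, ∀ u : Fin n → Fin m → ℝ, (∀ i g, 0 ≤ u i g) →
        TwoValue u → PositiveAdmitting u →
        ∀ A : Fin m → Fin n, Chosen f u A → EF1 u A)
    ↔ (∃ α β : ℝ, 0 < α ∧ f 0 = ⊥ ∧
        ∀ x : ℝ, 0 < x → f x = ((α * Real.log x + β : ℝ) : EReal)) := by
  refine ⟨fun hEF1 => ?_, fun ⟨α, β, hα, hf0, hf⟩ m u hu _ hpa A hA =>
    hA.EF1_of_log hα hf0 hf hu hpa⟩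
  obtain ⟨F, hFmono, hFcont, hF⟩ := exists_real_of_strictMonoOn hfmono hfcont
  have hdelta : DeltaSuccLt F :=
    deltaSuccLt_of_forall_EF1 hF hEF1 (i := ⟨0, by omega⟩) (j := ⟨1, hn⟩) (by simp [Fin.ext_iff])
  obtain ⟨α, β, hα, hlog⟩ := hdelta.exists_log hFmono hFcont
  have hf : ∀ x : ℝ, 0 < x → f x = ((α * Real.log x + β : ℝ) : EReal) := fun x hx => by
    rw [hF x hx, hlog x hx]
  exact ⟨α, β, hα, eq_bot_of_forall_lt_log hα fun x hx =>
    hf x hx ▸ hfmono Set.self_mem_Ici hx.le hx, hf⟩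

theorem real_twovalue (n : ℕ) (hn : 2 ≤ n) (f : ℝ → EReal)
    (hfmono : StrictMonoOn f (Set.Ici (0 : ℝ)))
    (hftop : ∀ x : ℝ, 0 ≤ x → f x ≠ ⊤)
    (hfcont : ContinuousOn f (Set.Ioi (0 : ℝ))) :
    (∀ m : ℕ, ∀ u : Fin n → Fin m → ℝ, (∀ i g, 0 ≤ u i g) →
        TwoValue u → PositiveAdmitting u →
        ∀ A : Fin m → Fin n, Chosen f u A → EF1 u A)
    ↔ (∃ α β : ℝ, 0 < α ∧ f 0 = ⊥ ∧
        ∀ x : ℝ, 0 < x → f x = ((α * Real.log x + β : ℝ) : EReal)) :=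
  real_twovalue_general n hn f hfmono hfcont

end FairDiv
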